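/- Assume κ ≠ 1 and let η := (1−κ)^{-1} − 1 and μ > 0. For every choice of sign functions s_1,s_2,s_3 : {1,…,n} → {−1,+1} and permutations π_1,π_2,π_3 of {1,…,n}, the supremum of ‖f̂(A,B) − A·B‖ over all A, B ∈ ℝ^{mn×mn} with ‖A‖ ≤ μ and ‖B‖ ≤ μ is at most the supremum of ‖f(A,B) − A·B‖ over the same set of matrices, plus |η|·μ²·‖Y‖. -/

import Mathlib

open scoped BigOperators Matrix

/-- Frobenius norm of a real matrix. -/
noncomputable def frob {ι κ : Type*} [Fintype ι] [Fintype κ] (A : Matrix ι κ ℝ) : ℝ :=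
  Real.sqrt (∑ i, ∑ j, (A i j) ^ 2)

/-- Frobenius norm of a 6-mode tensor. -/
noncomputable def frob6 {n : ℕ} (T : Fin n → Fin n → Fin n → Fin n → Fin n → Fin n → ℝ) : ℝ :=
  Real.sqrt (∑ k, ∑ l, ∑ k', ∑ l', ∑ i, ∑ j, (T k l k' l' i j) ^ 2)

/-- The 6-mode tensor Y with entries y_{klk'l'ij} = Σ_r u_{klr} v_{k'l'r} w_{ijr}. -/
noncomputable def Ytens {n R : ℕ} (U V W : Fin n → Fin n → Fin R → ℝ) :
    Fin n → Fin n → Fin n → Fin n → Fin n → Fin n → ℝ :=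
  fun k l k' l' i j => ∑ r, U k l r * V k' l' r * W i j r

/-- The exact matrix-multiplication tensor X, x_{klk'l'ij} = δ_{ki} δ_{l'j} δ_{lk'}. -/
def Xtens (n : ℕ) : Fin n → Fin n → Fin n → Fin n → Fin n → Fin n → ℝ :=
  fun k l k' l' i j =>
    (if k = i then (1 : ℝ) else 0) * (if l' = j then (1 : ℝ) else 0) *
      (if l = k' then (1 : ℝ) else 0)

/-- The block bilinear computation f on (mn)×(mn) matrices indexed by Fin n × Fin m
(first index: block position, second index: position within the m×m block). -/
noncomputable def blinf {n R m : ℕ} (U V W : Fin n → Fin n → Fin R → ℝ)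
    (A B : Matrix (Fin n × Fin m) (Fin n × Fin m) ℝ) :
    Matrix (Fin n × Fin m) (Fin n × Fin m) ℝ :=
  fun p q => ∑ r, W p.1 q.1 r *
    ∑ z, (∑ k, ∑ l, U k l r * A (k, p.2) (l, z)) *
         (∑ k', ∑ l', V k' l' r * B (k', z) (l', q.2))

/-- κ = n⁻³ Σ_{i,j,l} (1 − Σ_r u_{ilr} v_{ljr} w_{ijr}). -/
noncomputable def kappa {n R : ℕ} (U V W : Fin n → Fin n → Fin R → ℝ) : ℝ :=
  ((n : ℝ) ^ 3)⁻¹ * ∑ i, ∑ j, ∑ l, (1 - ∑ r, U i l r * V l j r * W i j r)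

/-- M = P S : block matrix with m×m block s(j)·I_m at block position (π(j), j). -/
def Mmat {n : ℕ} (m : ℕ) (s : Fin n → ℝ) (π : Equiv.Perm (Fin n)) :
    Matrix (Fin n × Fin m) (Fin n × Fin m) ℝ :=
  fun p q => if p.1 = π q.1 ∧ p.2 = q.2 then s q.1 else 0

/-- The randomized bilinear computation f̂(A,B) = (1−κ)⁻¹ M₁ᵀ f(M₁AM₂ᵀ, M₂BM₃ᵀ) M₃. -/
noncomputable def fhat {n R : ℕ} (m : ℕ) (U V W : Fin n → Fin n → Fin R → ℝ)
    (s₁ s₂ s₃ : Fin n → ℝ) (π₁ π₂ π₃ : Equiv.Perm (Fin n))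
    (A B : Matrix (Fin n × Fin m) (Fin n × Fin m) ℝ) :
    Matrix (Fin n × Fin m) (Fin n × Fin m) ℝ :=
  (1 - kappa U V W)⁻¹ •
    ((Mmat m s₁ π₁)ᵀ *
      blinf U V W (Mmat m s₁ π₁ * A * (Mmat m s₂ π₂)ᵀ) (Mmat m s₂ π₂ * B * (Mmat m s₃ π₃)ᵀ) *
      Mmat m s₃ π₃)



set_option maxHeartbeats 1000000

attribute [local instance] Matrix.frobeniusNormedAddCommGroup Matrix.frobeniusNormedRing
attribute [local instance] Matrix.frobeniusNormedSpace Matrix.frobeniusIsBoundedSMul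

lemma frob_eq_norm {ι κ : Type*} [Fintype ι] [Fintype κ] (A : Matrix ι κ ℝ) : frob A = ‖A‖ := by
  rw [frob, Matrix.frobenius_norm_def, Real.sqrt_eq_rpow]
  congr 1
  refine Finset.sum_congr rfl fun i _ => Finset.sum_congr rfl fun j _ => ?_
  rw [Real.rpow_two, Real.norm_eq_abs, sq_abs]

lemma frob_trace {ι κ : Type*} [Fintype ι] [Fintype κ] (A : Matrix ι κ ℝ) :
    frob A = Real.sqrt (Matrix.trace (Aᵀ * A)) := by
  rw [frob, Matrix.trace]
  congr 1
  simp only [Matrix.diag_apply, Matrix.mul_apply, Matrix.transpose_apply]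
  rw [Finset.sum_comm]
  exact Finset.sum_congr rfl fun i _ => Finset.sum_congr rfl fun j _ => (pow_two _)

lemma Mmat_mul_transpose {n m : ℕ} (s : Fin n → ℝ) (hs : ∀ j, s j = 1 ∨ s j = -1)
    (π : Equiv.Perm (Fin n)) : Mmat m s π * (Mmat m s π)ᵀ = 1 := by
  ext p q
  simp only [Matrix.mul_apply, Mmat, Matrix.transpose_apply, Matrix.one_apply]
  rw [Fintype.sum_prod_type]
  have hsq : ∀ j, s j * s j = 1 := by
    intro j; rcases hs j with h | h <;> rw [h] <;> norm_num
  by_cases hpq : p = q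
  · subst hpq
    simp only [if_pos]
    rw [Finset.sum_eq_single (π.symm p.1)]
    · simp [hsq]
    · intro b _ hb
      apply Finset.sum_eq_zero
      intro z _
      have : ¬ (p.1 = π b) := fun h => hb (by simp [h])
      simp [this]
    · simp
  · rw [if_neg hpq]
    apply Finset.sum_eq_zero; intro b _
    apply Finset.sum_eq_zero; intro z _
    by_cases h1 : p.1 = π b ∧ p.2 = z
    · have h2 : ¬ (q.1 = π b ∧ q.2 = z) := by
        rintro ⟨hq1, hq2⟩
        exact hpq (Prod.ext (h1.1.trans hq1.symm) (h1.2.trans hq2.symm))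
      simp [h2]
    · simp [h1]

lemma frob_conj {ι : Type*} [Fintype ι] [DecidableEq ι] (M₁ M₃ X : Matrix ι ι ℝ)
    (h1 : M₁ * M₁ᵀ = 1) (h3 : M₃ * M₃ᵀ = 1) : frob (M₁ᵀ * X * M₃) = frob X := by
  rw [frob_trace, frob_trace X]
  congr 1
  have e : (M₁ᵀ * X * M₃)ᵀ * (M₁ᵀ * X * M₃) = M₃ᵀ * (Xᵀ * ((M₁ * M₁ᵀ) * (X * M₃))) := by
    simp [Matrix.transpose_mul, Matrix.mul_assoc]
  rw [e, h1, Matrix.one_mul, Matrix.trace_mul_comm, ← Matrix.mul_assoc, Matrix.mul_assoc (Xᵀ * X),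
    h3, Matrix.mul_one]

lemma frob_conj' {ι : Type*} [Fintype ι] [DecidableEq ι] (M₁ M₂ X : Matrix ι ι ℝ)
    (h1 : M₁ * M₁ᵀ = 1) (h2 : M₂ * M₂ᵀ = 1) : frob (M₁ * X * M₂ᵀ) = frob X := by
  have h1' : M₁ᵀ * M₁ = 1 := mul_eq_one_comm.mp h1
  have := frob_conj M₁ᵀ M₂ᵀ X (by rw [Matrix.transpose_transpose]; exact h1')
    (by rw [Matrix.transpose_transpose]; exact mul_eq_one_comm.mp h2)
  rwa [Matrix.transpose_transpose] at this

lemma factor_sum {α β γ δ : Type*} [Fintype α] [Fintype β] [Fintype γ] [Fintype δ]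
    (F : α → γ → ℝ) (G : β → δ → ℝ) :
    ∑ p : α × β, ∑ q : γ × δ, F p.1 q.1 * G p.2 q.2 =
      (∑ a, ∑ c, F a c) * (∑ b, ∑ d, G b d) := by
  calc ∑ p : α × β, ∑ q : γ × δ, F p.1 q.1 * G p.2 q.2
      = ∑ a, ∑ b, ∑ c, ∑ d, F a c * G b d := by simp only [Fintype.sum_prod_type]
    _ = ∑ a, ∑ b, (∑ c, F a c) * (∑ d, G b d) := by
        refine Finset.sum_congr rfl fun a _ => Finset.sum_congr rfl fun b _ => ?_
        rw [Finset.sum_mul_sum]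
    _ = (∑ a, ∑ c, F a c) * (∑ b, ∑ d, G b d) := by rw [Finset.sum_mul_sum]

lemma factor_sum2 {α β : Type*} [Fintype α] [Fintype β] (F : β → ℝ) (G : α → ℝ) :
    ∑ p : α × β, F p.2 * G p.1 = (∑ b, F b) * (∑ a, G a) := by
  calc ∑ p : α × β, F p.2 * G p.1 = ∑ b, ∑ a, F b * G a := by
        rw [Fintype.sum_prod_type]; exact Finset.sum_comm
    _ = (∑ b, F b) * (∑ a, G a) := (Finset.sum_mul_sum _ _ _ _).symm

lemma blinf_apply_Y {n R m : ℕ} (U V W : Fin n → Fin n → Fin R → ℝ)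
    (A B : Matrix (Fin n × Fin m) (Fin n × Fin m) ℝ) (p q : Fin n × Fin m) :
    blinf U V W A B p q =
      ∑ b : (Fin n × Fin n) × Fin n × Fin n,
        Ytens U V W b.2.1 b.2.2 b.1.1 b.1.2 p.1 q.1 *
        ∑ z, A (b.2.1, p.2) (b.2.2, z) * B (b.1.1, z) (b.1.2, q.2) := by
  have L : blinf U V W A B p q = ∑ a : Fin R × Fin m, ∑ b : (Fin n × Fin n) × Fin n × Fin n,
      W p.1 q.1 a.1 * (U b.2.1 b.2.2 a.1 * A (b.2.1, p.2) (b.2.2, a.2) *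
        (V b.1.1 b.1.2 a.1 * B (b.1.1, a.2) (b.1.2, q.2))) := by
    simp only [blinf, Fintype.sum_prod_type, Finset.mul_sum, Finset.sum_mul]
  rw [L, Finset.sum_comm]
  refine Finset.sum_congr rfl fun b _ => ?_
  simp only [Ytens]
  rw [Fintype.sum_prod_type, Fintype.sum_mul_sum
    (fun r => U b.2.1 b.2.2 r * V b.1.1 b.1.2 r * W p.1 q.1 r)
    (fun z => A (b.2.1, p.2) (b.2.2, z) * B (b.1.1, z) (b.1.2, q.2))]
  refine Finset.sum_congr rfl fun r _ => Finset.sum_congr rfl fun z _ => ?_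
  ring

lemma frob_nonneg {ι κ : Type*} [Fintype ι] [Fintype κ] (A : Matrix ι κ ℝ) : 0 ≤ frob A :=
  Real.sqrt_nonneg _

lemma frob6_nonneg {n : ℕ} (T : Fin n → Fin n → Fin n → Fin n → Fin n → Fin n → ℝ) :
    0 ≤ frob6 T := Real.sqrt_nonneg _

lemma frob_blinf_le {n R m : ℕ} (U V W : Fin n → Fin n → Fin R → ℝ)
    (A B : Matrix (Fin n × Fin m) (Fin n × Fin m) ℝ) :
    frob (blinf U V W A B) ≤ frob6 (Ytens U V W) * (frob A * frob B) := by
  set Yl : ((Fin n × Fin n) × Fin n × Fin n) → Fin n → Fin n → ℝ := fun b i j =>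
    Ytens U V W b.2.1 b.2.2 b.1.1 b.1.2 i j with hYl
  set C : ((Fin n × Fin n) × Fin n × Fin n) → Fin m → Fin m → ℝ := fun b p2 q2 =>
    ∑ z, A (b.2.1, p2) (b.2.2, z) * B (b.1.1, z) (b.1.2, q2) with hC
  have hentry : ∀ p q : Fin n × Fin m, (blinf U V W A B p q)^2 ≤
      (∑ b, (Yl b p.1 q.1)^2) * (∑ b, (C b p.2 q.2)^2) := by
    intro p q
    rw [blinf_apply_Y]
    exact Finset.sum_mul_sq_le_sq_mul_sq _ _ _
  have hCle : ∀ (b) (p2 q2 : Fin m), (C b p2 q2)^2 ≤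
      (∑ z, (A (b.2.1, p2) (b.2.2, z))^2) * (∑ z, (B (b.1.1, z) (b.1.2, q2))^2) := by
    intro b p2 q2
    exact Finset.sum_mul_sq_le_sq_mul_sq _ _ _
  have hYfrob : (∑ i, ∑ j, ∑ b : (Fin n × Fin n) × Fin n × Fin n, (Yl b i j)^2) =
      (frob6 (Ytens U V W))^2 := by
    rw [frob6, Real.sq_sqrt (by positivity)]
    have h1 : (∑ k, ∑ l, ∑ k', ∑ l', ∑ i, ∑ j, (Ytens U V W k l k' l' i j) ^ 2) =
        ∑ y : (Fin n × Fin n) × (Fin n × Fin n) × Fin n × Fin n,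
          (Ytens U V W y.1.1 y.1.2 y.2.1.1 y.2.1.2 y.2.2.1 y.2.2.2)^2 := by
      simp only [Fintype.sum_prod_type]
    have h2 : (∑ i, ∑ j, ∑ b : (Fin n × Fin n) × Fin n × Fin n, (Yl b i j)^2) =
        ∑ x : (Fin n × Fin n) × (Fin n × Fin n) × Fin n × Fin n,
          (Yl x.2 x.1.1 x.1.2)^2 := by
      simp only [Fintype.sum_prod_type]
    rw [h1, h2]
    exact Fintype.sum_equiv
      (show ((Fin n × Fin n) × (Fin n × Fin n) × Fin n × Fin n) ≃
          ((Fin n × Fin n) × (Fin n × Fin n) × Fin n × Fin n) from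
        ⟨fun x => (x.2.2, x.2.1, x.1), fun y => (y.2.2, y.2.1, y.1),
          fun ⟨a, b, c⟩ => rfl, fun ⟨a, b, c⟩ => rfl⟩)
      (fun x => (Yl x.2 x.1.1 x.1.2)^2)
      (fun y => (Ytens U V W y.1.1 y.1.2 y.2.1.1 y.2.1.2 y.2.2.1 y.2.2.2)^2)
      (fun x => rfl)
  have hAfrob : (∑ p2 : Fin m, ∑ b2 : Fin n × Fin n, ∑ z, (A (b2.1, p2) (b2.2, z))^2) =
      (frob A)^2 := by
    rw [frob, Real.sq_sqrt (by positivity)]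
    simp only [Fintype.sum_prod_type]
    exact Finset.sum_comm
  have hBfrob : (∑ q2 : Fin m, ∑ b1 : Fin n × Fin n, ∑ z : Fin m, (B (b1.1, z) (b1.2, q2))^2) =
      (frob B)^2 := by
    rw [frob, Real.sq_sqrt (by positivity)]
    have h1 : (∑ q2 : Fin m, ∑ b1 : Fin n × Fin n, ∑ z : Fin m, (B (b1.1, z) (b1.2, q2))^2) =
        ∑ x : Fin m × (Fin n × Fin n) × Fin m, (B (x.2.1.1, x.2.2) (x.2.1.2, x.1))^2 := by
      simp only [Fintype.sum_prod_type]
    have h2 : (∑ i, ∑ j, (B i j)^2) =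
        ∑ y : (Fin n × Fin m) × Fin n × Fin m, (B (y.1.1, y.1.2) (y.2.1, y.2.2))^2 := by
      simp only [Fintype.sum_prod_type]
    rw [h1, h2]
    exact Fintype.sum_equiv
      (show (Fin m × (Fin n × Fin n) × Fin m) ≃ ((Fin n × Fin m) × Fin n × Fin m) from
        ⟨fun x => ((x.2.1.1, x.2.2), x.2.1.2, x.1), fun y => (y.2.2, (y.1.1, y.2.1), y.1.2),
          fun ⟨a, ⟨b, c⟩, d⟩ => rfl, fun ⟨⟨a, b⟩, c, d⟩ => rfl⟩)
      (fun x => (B (x.2.1.1, x.2.2) (x.2.1.2, x.1))^2)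
      (fun y => (B (y.1.1, y.1.2) (y.2.1, y.2.2))^2)
      (fun x => rfl)
  have hCtot : (∑ p2, ∑ q2, ∑ b : (Fin n × Fin n) × Fin n × Fin n, (C b p2 q2)^2) ≤
      (frob A)^2 * (frob B)^2 := by
    calc (∑ p2, ∑ q2, ∑ b : (Fin n × Fin n) × Fin n × Fin n, (C b p2 q2)^2)
        ≤ ∑ p2, ∑ q2, ∑ b : (Fin n × Fin n) × Fin n × Fin n,
            (∑ z, (A (b.2.1, p2) (b.2.2, z))^2) * (∑ z, (B (b.1.1, z) (b.1.2, q2))^2) := by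
          refine Finset.sum_le_sum fun p2 _ => Finset.sum_le_sum fun q2 _ =>
            Finset.sum_le_sum fun b _ => hCle b p2 q2
      _ = ∑ p2, ∑ q2, (∑ b2 : Fin n × Fin n, ∑ z, (A (b2.1, p2) (b2.2, z))^2) *
            (∑ b1 : Fin n × Fin n, ∑ z, (B (b1.1, z) (b1.2, q2))^2) := by
          refine Finset.sum_congr rfl fun p2 _ => Finset.sum_congr rfl fun q2 _ => ?_
          exact factor_sum2 (fun b2 : Fin n × Fin n => ∑ z, (A (b2.1, p2) (b2.2, z))^2)
            (fun b1 : Fin n × Fin n => ∑ z, (B (b1.1, z) (b1.2, q2))^2)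
      _ = (∑ p2 : Fin m, ∑ b2 : Fin n × Fin n, ∑ z, (A (b2.1, p2) (b2.2, z))^2) *
            (∑ q2 : Fin m, ∑ b1 : Fin n × Fin n, ∑ z, (B (b1.1, z) (b1.2, q2))^2) :=
          (Finset.sum_mul_sum Finset.univ Finset.univ
            (fun p2 => ∑ b2 : Fin n × Fin n, ∑ z, (A (b2.1, p2) (b2.2, z))^2)
            (fun q2 => ∑ b1 : Fin n × Fin n, ∑ z, (B (b1.1, z) (b1.2, q2))^2)).symm
      _ = (frob A)^2 * (frob B)^2 := by rw [hAfrob, hBfrob]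
  have key : (∑ p : Fin n × Fin m, ∑ q : Fin n × Fin m, (blinf U V W A B p q)^2) ≤
      (frob6 (Ytens U V W))^2 * ((frob A)^2 * (frob B)^2) := by
    calc (∑ p : Fin n × Fin m, ∑ q : Fin n × Fin m, (blinf U V W A B p q)^2)
        ≤ ∑ p : Fin n × Fin m, ∑ q : Fin n × Fin m,
            (∑ b, (Yl b p.1 q.1)^2) * (∑ b, (C b p.2 q.2)^2) :=
          Finset.sum_le_sum fun p _ => Finset.sum_le_sum fun q _ => hentry p q
      _ = (∑ i, ∑ j, ∑ b, (Yl b i j)^2) * (∑ p2, ∑ q2, ∑ b, (C b p2 q2)^2) :=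
          factor_sum (fun i j => ∑ b, (Yl b i j)^2) (fun p2 q2 => ∑ b, (C b p2 q2)^2)
      _ ≤ (frob6 (Ytens U V W))^2 * ((frob A)^2 * (frob B)^2) := by
          rw [hYfrob]
          exact mul_le_mul_of_nonneg_left hCtot (sq_nonneg _)
  calc frob (blinf U V W A B)
      = Real.sqrt (∑ p, ∑ q, (blinf U V W A B p q)^2) := rfl
    _ ≤ Real.sqrt ((frob6 (Ytens U V W))^2 * ((frob A)^2 * (frob B)^2)) :=
        Real.sqrt_le_sqrt key
    _ = frob6 (Ytens U V W) * (frob A * frob B) := by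
        rw [Real.sqrt_mul (sq_nonneg _), Real.sqrt_mul (sq_nonneg _),
          Real.sqrt_sq (frob6_nonneg _), Real.sqrt_sq (frob_nonneg _),
          Real.sqrt_sq (frob_nonneg _)]

theorem stmt2 (n R m : ℕ) (hn : 0 < n) (hR : 0 < R) (hm : 1 ≤ m)
    (U V W : Fin n → Fin n → Fin R → ℝ) (hκ : kappa U V W ≠ 1)
    (μ : ℝ) (hμ : 0 < μ)
    (s₁ s₂ s₃ : Fin n → ℝ)
    (hs₁ : ∀ j, s₁ j = 1 ∨ s₁ j = -1) (hs₂ : ∀ j, s₂ j = 1 ∨ s₂ j = -1)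
    (hs₃ : ∀ j, s₃ j = 1 ∨ s₃ j = -1)
    (π₁ π₂ π₃ : Equiv.Perm (Fin n)) :
    sSup {x : ℝ | ∃ A B : Matrix (Fin n × Fin m) (Fin n × Fin m) ℝ,
        frob A ≤ μ ∧ frob B ≤ μ ∧ x = frob (fhat m U V W s₁ s₂ s₃ π₁ π₂ π₃ A B - A * B)} ≤
      sSup {x : ℝ | ∃ A B : Matrix (Fin n × Fin m) (Fin n × Fin m) ℝ,
        frob A ≤ μ ∧ frob B ≤ μ ∧ x = frob (blinf U V W A B - A * B)} +
      |(1 - kappa U V W)⁻¹ - 1| * μ ^ 2 * frob6 (Ytens U V W) := by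
  set S2 : Set ℝ := {x : ℝ | ∃ A B : Matrix (Fin n × Fin m) (Fin n × Fin m) ℝ,
      frob A ≤ μ ∧ frob B ≤ μ ∧ x = frob (blinf U V W A B - A * B)} with hS2
  have h0mem : (0 : ℝ) ∈ S2 := by
    refine ⟨0, 0, by simp [frob, hμ.le], by simp [frob, hμ.le], ?_⟩
    have hb : blinf U V W (0 : Matrix (Fin n × Fin m) (Fin n × Fin m) ℝ) 0 = 0 := by
      ext p q; simp [blinf]
    simp [hb, frob]
  have hbdd : BddAbove S2 := by
    refine ⟨frob6 (Ytens U V W) * (μ * μ) + μ * μ, ?_⟩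
    rintro x ⟨A, B, hA, hB, rfl⟩
    have h1 : frob (blinf U V W A B - A * B) ≤ frob (blinf U V W A B) + frob (A * B) := by
      rw [frob_eq_norm, frob_eq_norm, frob_eq_norm]
      exact norm_sub_le _ _
    have h2 : frob (blinf U V W A B) ≤ frob6 (Ytens U V W) * (μ * μ) :=
      (frob_blinf_le U V W A B).trans (mul_le_mul_of_nonneg_left
        (mul_le_mul hA hB (frob_nonneg _) hμ.le) (frob6_nonneg _))
    have h3 : frob (A * B) ≤ μ * μ := by
      rw [frob_eq_norm]
      refine (norm_mul_le A B).trans ?_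
      rw [← frob_eq_norm, ← frob_eq_norm]
      exact mul_le_mul hA hB (frob_nonneg _) hμ.le
    linarith
  have hS2nonneg : (0 : ℝ) ≤ sSup S2 := le_csSup hbdd h0mem
  have hKnonneg : (0 : ℝ) ≤ |(1 - kappa U V W)⁻¹ - 1| * μ ^ 2 * frob6 (Ytens U V W) := by
    have := frob6_nonneg (Ytens U V W)
    positivity
  refine Real.sSup_le ?_ (by linarith)
  rintro x ⟨A, B, hA, hB, rfl⟩
  set M₁ := Mmat m s₁ π₁
  set M₂ := Mmat m s₂ π₂
  set M₃ := Mmat m s₃ π₃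
  have h₁ : M₁ * M₁ᵀ = 1 := Mmat_mul_transpose s₁ hs₁ π₁
  have h₂ : M₂ * M₂ᵀ = 1 := Mmat_mul_transpose s₂ hs₂ π₂
  have h₃ : M₃ * M₃ᵀ = 1 := Mmat_mul_transpose s₃ hs₃ π₃
  have h₁' : M₁ᵀ * M₁ = 1 := mul_eq_one_comm.mp h₁
  have h₂' : M₂ᵀ * M₂ = 1 := mul_eq_one_comm.mp h₂
  have h₃' : M₃ᵀ * M₃ = 1 := mul_eq_one_comm.mp h₃
  set At := M₁ * A * M₂ᵀ with hAt
  set Bt := M₂ * B * M₃ᵀ with hBt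
  set F := blinf U V W At Bt with hF
  set c : ℝ := (1 - kappa U V W)⁻¹ with hc
  have hAtf : frob At = frob A := frob_conj' M₁ M₂ A h₁ h₂
  have hBtf : frob Bt = frob B := frob_conj' M₂ M₃ B h₂ h₃
  have hABeq : M₁ᵀ * (At * Bt) * M₃ = A * B := by
    have e1 : M₁ᵀ * (At * Bt) * M₃ =
        (M₁ᵀ * M₁) * (A * ((M₂ᵀ * M₂) * (B * (M₃ᵀ * M₃)))) := by
      rw [hAt, hBt]
      simp only [Matrix.mul_assoc]
    rw [e1, h₁', h₂', h₃']
    simp [Matrix.mul_assoc]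
  have hdec : fhat m U V W s₁ s₂ s₃ π₁ π₂ π₃ A B - A * B =
      M₁ᵀ * (F - At * Bt) * M₃ + (c - 1) • (M₁ᵀ * F * M₃) := by
    have e2 : fhat m U V W s₁ s₂ s₃ π₁ π₂ π₃ A B = c • (M₁ᵀ * F * M₃) := rfl
    rw [e2, Matrix.mul_sub, Matrix.sub_mul, hABeq]
    module
  have hstep : frob (fhat m U V W s₁ s₂ s₃ π₁ π₂ π₃ A B - A * B) ≤
      frob (F - At * Bt) + |c - 1| * frob F := by
    rw [hdec]
    have t1 : frob (M₁ᵀ * (F - At * Bt) * M₃ + (c - 1) • (M₁ᵀ * F * M₃)) ≤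
        frob (M₁ᵀ * (F - At * Bt) * M₃) + frob ((c - 1) • (M₁ᵀ * F * M₃)) := by
      rw [frob_eq_norm, frob_eq_norm, frob_eq_norm]
      exact norm_add_le _ _
    have t2 : frob (M₁ᵀ * (F - At * Bt) * M₃) = frob (F - At * Bt) :=
      frob_conj M₁ M₃ _ h₁ h₃
    have t3 : frob ((c - 1) • (M₁ᵀ * F * M₃)) = |c - 1| * frob F := by
      rw [frob_eq_norm, norm_smul, Real.norm_eq_abs, ← frob_eq_norm,
        frob_conj M₁ M₃ F h₁ h₃]
    rw [t2, t3] at t1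
    exact t1
  have hmem : frob (F - At * Bt) ∈ S2 := by
    exact ⟨At, Bt, by rw [hAtf]; exact hA, by rw [hBtf]; exact hB, rfl⟩
  have hle1 : frob (F - At * Bt) ≤ sSup S2 := le_csSup hbdd hmem
  have hle2 : |c - 1| * frob F ≤ |c - 1| * μ ^ 2 * frob6 (Ytens U V W) := by
    have hf : frob F ≤ μ ^ 2 * frob6 (Ytens U V W) := by
      refine (frob_blinf_le U V W At Bt).trans ?_
      rw [hAtf, hBtf]
      have : frob A * frob B ≤ μ ^ 2 := by
        rw [pow_two]
        exact mul_le_mul hA hB (frob_nonneg _) hμ.le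
      calc frob6 (Ytens U V W) * (frob A * frob B)
          ≤ frob6 (Ytens U V W) * μ ^ 2 :=
            mul_le_mul_of_nonneg_left this (frob6_nonneg _)
        _ = μ ^ 2 * frob6 (Ytens U V W) := mul_comm _ _
    calc |c - 1| * frob F ≤ |c - 1| * (μ ^ 2 * frob6 (Ytens U V W)) :=
          mul_le_mul_of_nonneg_left hf (abs_nonneg _)
      _ = |c - 1| * μ ^ 2 * frob6 (Ytens U V W) := by ring
  calc frob (fhat m U V W s₁ s₂ s₃ π₁ π₂ π₃ A B - A * B)
      ≤ frob (F - At * Bt) + |c - 1| * frob F := hstep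
    _ ≤ sSup S2 + |c - 1| * μ ^ 2 * frob6 (Ytens U V W) := add_le_add hle1 hle2
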